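/- Let π: S⁵ → ℂP² be the Hopf map and let q: ℂP² → ℂP²/ℂP¹ be the quotient map collapsing the standardly embedded ℂP¹ (the set of complex lines contained in the coordinate plane ℂ² × {0} ⊂ ℂ³) to a single point. Then the composite q ∘ π: S⁵ → ℂP²/ℂP¹ is null-homotopic, i.e., homotopic to a constant map. -/

import Mathlib

noncomputable section

/-- Two nonzero vectors of `ℂ³` span the same complex line. -/
def projRel (v w : {v : EuclideanSpace ℂ (Fin 3) // v ≠ 0}) : Prop :=
  ∃ c : ℂ, c ≠ 0 ∧ (w : EuclideanSpace ℂ (Fin 3)) = c • (v : EuclideanSpace ℂ (Fin 3))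

/-- The complex projective plane `ℂP²`: the projectivization of `ℂ³`, i.e. the space of complex
lines through the origin in `ℂ³`, with the quotient topology. -/
def CP2 : Type := Quot projRel

instance : TopologicalSpace CP2 :=
  inferInstanceAs (TopologicalSpace (Quot projRel))

theorem sphere_ne_zero (x : Metric.sphere (0 : EuclideanSpace ℂ (Fin 3)) 1) :
    (x : EuclideanSpace ℂ (Fin 3)) ≠ 0 := by
  intro h
  have hx := x.2
  rw [mem_sphere_zero_iff_norm, h, norm_zero] at hx
  exact zero_ne_one hx

/-- The Hopf map `S⁵ → ℂP²`: the restriction to the unit sphere of `ℂ³` of the canonical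
quotient map onto the projectivization of `ℂ³`. -/
def hopf : C(Metric.sphere (0 : EuclideanSpace ℂ (Fin 3)) 1, CP2) :=
  ⟨fun x => Quot.mk projRel ⟨x, sphere_ne_zero x⟩,
    continuous_quot_mk.comp (Continuous.subtype_mk continuous_subtype_val _)⟩

/-- The standardly embedded `ℂP¹ ⊂ ℂP²`: the set of complex lines contained in the coordinate
plane `ℂ² × {0} ⊂ ℂ³`. -/
def CP1set : Set CP2 :=
  {z | ∃ v : {v : EuclideanSpace ℂ (Fin 3) // v ≠ 0},
    (v : EuclideanSpace ℂ (Fin 3)) 2 = 0 ∧ Quot.mk projRel v = z}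

/-- The relation collapsing `ℂP¹` to a point. -/
def collapseRel (a b : CP2) : Prop := a ∈ CP1set ∧ b ∈ CP1set

/-- The quotient `ℂP²/ℂP¹`, obtained by identifying `ℂP¹ ⊂ ℂP²` to a single point. -/
def CP2modCP1 : Type := Quot collapseRel

instance : TopologicalSpace CP2modCP1 :=
  inferInstanceAs (TopologicalSpace (Quot collapseRel))

/-- The quotient map `q : ℂP² → ℂP²/ℂP¹`. -/
def collapseMap : C(CP2, CP2modCP1) :=
  ⟨Quot.mk collapseRel, continuous_quot_mk⟩

/-!
Represent the line of `x ∈ S⁵` by `x̄₂ x = (x̄₂ x₀, x̄₂ x₁, |x₂|²)`, which vanishes exactly over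
`ℂP¹`, and deform this vector until it becomes `(0, 0, 1)`. The deformation vanishes only where
`t = 0` and `x₂ = 0`, and near those points its direction approaches `ℂ² × {0}`. The unit sphere
of `ℂ² × {0}` is compact and is sent to the collapsed point, so every neighbourhood of that point
contains the classes of all vectors with relatively small third coordinate; this gives continuity.
-/

open ComplexConjugate Filter Topology

local notation "ℂ³" => EuclideanSpace ℂ (Fin 3)

def collapsedPt : CP2modCP1 :=
  collapseMap (Quot.mk projRel ⟨EuclideanSpace.single 0 1, by simp⟩)

def lineClass (v : ℂ³) : CP2modCP1 :=
  if h : v = 0 then collapsedPt else collapseMap (Quot.mk projRel ⟨v, h⟩)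

lemma lineClass_zero : lineClass 0 = collapsedPt := dif_pos rfl

lemma lineClass_of_ne_zero {v : ℂ³} (hv : v ≠ 0) :
    lineClass v = collapseMap (Quot.mk projRel ⟨v, hv⟩) :=
  dif_neg hv

lemma lineClass_smul {c : ℂ} (hc : c ≠ 0) (v : ℂ³) : lineClass (c • v) = lineClass v := by
  rcases eq_or_ne v 0 with rfl | hv
  · rw [smul_zero]
  · rw [lineClass_of_ne_zero hv, lineClass_of_ne_zero (smul_ne_zero hc hv)]
    exact congrArg collapseMap (Quot.sound ⟨c, hc, rfl⟩).symm

lemma lineClass_of_apply_two_eq_zero {v : ℂ³} (hv : v 2 = 0) : lineClass v = collapsedPt := by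
  rcases eq_or_ne v 0 with rfl | hv0
  · exact lineClass_zero
  · rw [lineClass_of_ne_zero hv0]
    exact Quot.sound ⟨⟨_, hv, rfl⟩, ⟨_, by simp, rfl⟩⟩

lemma lineClass_conj_apply_two_smul (v : ℂ³) : lineClass (conj (v 2) • v) = lineClass v := by
  by_cases hv : v 2 = 0
  · rw [lineClass_of_apply_two_eq_zero hv, lineClass_of_apply_two_eq_zero (by simp [hv])]
  · exact lineClass_smul (by simpa using hv) v

lemma continuousAt_lineClass {v : ℂ³} (hv : v ≠ 0) : ContinuousAt lineClass v := by
  refine ContinuousOn.continuousAt ?_ (isOpen_ne.mem_nhds hv)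
  rw [continuousOn_iff_continuous_domRestrict]
  have : {v : ℂ³ | v ≠ 0}.domRestrict lineClass = fun w => collapseMap (Quot.mk projRel w) :=
    funext fun w => lineClass_of_ne_zero w.2
  rw [this]
  exact (map_continuous collapseMap).comp continuous_quot_mk

lemma collapseMap_comp_hopf_apply (x : Metric.sphere (0 : ℂ³) 1) :
    collapseMap (hopf x) = lineClass x :=
  (lineClass_of_ne_zero (sphere_ne_zero x)).symm

lemma exists_pos_forall_lineClass_mem {W : Set CP2modCP1} (hW : W ∈ 𝓝 collapsedPt) :
    ∃ ε > 0, ∀ v : ℂ³, ‖v 2‖ ≤ ε * ‖v‖ → lineClass v ∈ W := by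
  obtain ⟨W', hW'W, hW'open, hW'⟩ := mem_nhds_iff.mp hW
  have hU : IsOpen ((collapseMap.comp hopf) ⁻¹' W') := hW'open.preimage (map_continuous _)
  obtain ⟨δ, hδ, hδU⟩ := hU.isClosed_compl.isCompact.exists_forall_le' (a := 0)
    (f := fun x : Metric.sphere (0 : ℂ³) 1 => ‖(x : ℂ³) 2‖) (by fun_prop) fun x hx => by
      refine norm_pos_iff.mpr fun hx2 => hx ?_
      rwa [Set.mem_preimage, ContinuousMap.comp_apply, collapseMap_comp_hopf_apply,
        lineClass_of_apply_two_eq_zero hx2]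
  refine ⟨δ / 2, by positivity, fun v hv => ?_⟩
  rcases eq_or_ne v 0 with rfl | hv0
  · rw [lineClass_zero]
    exact mem_of_mem_nhds hW
  have hc : (‖v‖⁻¹ : ℂ) ≠ 0 := by simpa using hv0
  let w : Metric.sphere (0 : ℂ³) 1 :=
    ⟨(‖v‖⁻¹ : ℂ) • v, mem_sphere_zero_iff_norm.2 (norm_smul_inv_norm hv0)⟩
  have hw : w ∈ (collapseMap.comp hopf) ⁻¹' W' := by
    by_contra hw
    have hδw := hδU w hw
    have hv' : 0 < ‖v‖ := norm_pos_iff.mpr hv0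
    simp only [w, PiLp.smul_apply, smul_eq_mul, norm_mul, norm_inv, Complex.norm_real,
      norm_norm] at hδw
    rw [le_inv_mul_iff₀ hv'] at hδw
    nlinarith
  rw [← lineClass_smul hc, ← collapseMap_comp_hopf_apply w]
  exact hW'W hw

lemma continuousAt_lineClass_comp {Z : Type*} [TopologicalSpace Z] {V : Z → ℂ³} {z : Z}
    (hz : V z = 0) (hV : ∀ ε > 0, ∀ᶠ z' in 𝓝 z, ‖V z' 2‖ ≤ ε * ‖V z'‖) :
    ContinuousAt (fun z' => lineClass (V z')) z := by
  intro W hW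
  obtain ⟨ε, hε, hεW⟩ :=
    exists_pos_forall_lineClass_mem (W := W) (by simpa [hz, lineClass_zero] using hW)
  exact (hV ε hε).mono fun z' hz' => hεW _ hz'

/-- With `j (x₀, x₁) = (x̄₁, -x̄₀)` the quaternionic structure of `ℂ²` and `q = (1 - t) x̄₂ + t j`,
this is `((1 - t) q (x₀, x₁), |q|²)`. As `x̄₂ (x₀, x₁) ⊥ j (x₀, x₁)`,
`|q (x₀, x₁)| = |q| |(x₀, x₁)|`, which keeps the third coordinate small compared with the first
two where the vector is small. -/
def nullhomotopyVec (t : ℝ) (x : ℂ³) : ℂ³ :=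
  !₂[(1 - t) * ((1 - t) * conj (x 2) * x 0 + t * conj (x 1)),
    (1 - t) * ((1 - t) * conj (x 2) * x 1 - t * conj (x 0)),
    (((1 - t) ^ 2 * ‖x 2‖ ^ 2 + t ^ 2 : ℝ) : ℂ)]

lemma continuous_nullhomotopyVec : Continuous fun p : ℝ × ℂ³ => nullhomotopyVec p.1 p.2 := by
  unfold nullhomotopyVec
  fun_prop

lemma nullhomotopyVec_apply_two (t : ℝ) (x : ℂ³) :
    nullhomotopyVec t x 2 = (((1 - t) ^ 2 * ‖x 2‖ ^ 2 + t ^ 2 : ℝ) : ℂ) :=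
  rfl

lemma nullhomotopyVec_zero (x : ℂ³) : nullhomotopyVec 0 x = conj (x 2) • x := by
  ext i
  fin_cases i <;> simp [nullhomotopyVec, ← Complex.conj_mul']

lemma nullhomotopyVec_one (x : ℂ³) : nullhomotopyVec 1 x = EuclideanSpace.single 2 1 := by
  ext i
  fin_cases i <;> simp [nullhomotopyVec]

lemma nullhomotopyVec_eq_zero_iff {t : ℝ} {x : ℂ³} :
    nullhomotopyVec t x = 0 ↔ t = 0 ∧ x 2 = 0 := by
  refine ⟨fun h => ?_, fun ⟨ht, hx2⟩ => by simp [ht, hx2, nullhomotopyVec_zero]⟩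
  have h2 := congrArg (· 2) h
  simp only [nullhomotopyVec_apply_two, PiLp.zero_apply, Complex.ofReal_eq_zero] at h2
  obtain rfl : t = 0 := by nlinarith [mul_nonneg (sq_nonneg (1 - t)) (sq_nonneg ‖x 2‖)]
  simpa using h2

lemma norm_sq_nullhomotopyVec (t : ℝ) (x : ℂ³) :
    ‖nullhomotopyVec t x‖ ^ 2 = (1 - t) ^ 2 * ((1 - t) ^ 2 * ‖x 2‖ ^ 2 + t ^ 2) *
      (‖x 0‖ ^ 2 + ‖x 1‖ ^ 2) + ((1 - t) ^ 2 * ‖x 2‖ ^ 2 + t ^ 2) ^ 2 := by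
  rw [EuclideanSpace.norm_sq_eq, Fin.sum_univ_three]
  apply Complex.ofReal_injective
  simp only [nullhomotopyVec]
  push_cast
  simp only [← Complex.mul_conj', map_mul, map_add, map_sub, map_one, map_pow, Complex.conj_conj,
    Complex.conj_ofReal]
  ring

lemma eventually_norm_nullhomotopyVec_two_le {x : ℂ³} (hx : x ≠ 0) (hx2 : x 2 = 0) {ε : ℝ}
    (hε : 0 < ε) : ∀ᶠ p : ℝ × ℂ³ in 𝓝 (0, x),
      ‖nullhomotopyVec p.1 p.2 2‖ ≤ ε * ‖nullhomotopyVec p.1 p.2‖ := by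
  have hx01 : 0 < ‖x 0‖ ^ 2 + ‖x 1‖ ^ 2 := by
    have h := EuclideanSpace.norm_sq_eq x
    rw [Fin.sum_univ_three, hx2, norm_zero] at h
    nlinarith [norm_pos_iff.2 hx]
  have hlt : ∀ᶠ p : ℝ × ℂ³ in 𝓝 (0, x), (1 - p.1) ^ 2 * ‖p.2 2‖ ^ 2 + p.1 ^ 2 <
      ε ^ 2 * ((1 - p.1) ^ 2 * (‖p.2 0‖ ^ 2 + ‖p.2 1‖ ^ 2)) := by
    refine ContinuousAt.eventually_lt (by fun_prop) (by fun_prop) ?_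
    simpa [hx2] using mul_pos (pow_pos hε 2) hx01
  filter_upwards [hlt] with ⟨t, y⟩ hm_lt
  set m := (1 - t) ^ 2 * ‖y 2‖ ^ 2 + t ^ 2
  have hm : 0 ≤ m := by positivity
  rw [nullhomotopyVec_apply_two, Complex.norm_real, Real.norm_of_nonneg hm]
  refine le_of_pow_le_pow_left₀ two_ne_zero (by positivity) ?_
  rw [mul_pow, norm_sq_nullhomotopyVec]
  nlinarith [mul_le_mul_of_nonneg_left hm_lt.le hm, sq_nonneg (ε * m)]

lemma continuousAt_lineClass_nullhomotopyVec (t : ℝ) {x : ℂ³} (hx : x ≠ 0) :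
    ContinuousAt (fun p : ℝ × ℂ³ => lineClass (nullhomotopyVec p.1 p.2)) (t, x) := by
  by_cases h : nullhomotopyVec t x = 0
  · obtain ⟨rfl, hx2⟩ := nullhomotopyVec_eq_zero_iff.1 h
    exact continuousAt_lineClass_comp h fun _ hε => eventually_norm_nullhomotopyVec_two_le hx hx2 hε
  · exact ContinuousAt.comp (g := lineClass) (continuousAt_lineClass h)
      continuous_nullhomotopyVec.continuousAt

/-- The composite `q ∘ π : S⁵ → ℂP²/ℂP¹` of the Hopf map with the map collapsing `ℂP¹` to a
point is null-homotopic. -/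
theorem collapse_comp_hopf_nullhomotopic :
    (collapseMap.comp hopf).Nullhomotopic :=
  ⟨lineClass (EuclideanSpace.single 2 1), ⟨
    { toFun := fun p => lineClass (nullhomotopyVec p.1 p.2)
      continuous_toFun := continuous_iff_continuousAt.2 fun p =>
        (continuousAt_lineClass_nullhomotopyVec _ (sphere_ne_zero p.2)).comp
          (f := fun p : unitInterval × Metric.sphere (0 : ℂ³) 1 => ((p.1 : ℝ), (p.2 : ℂ³)))
          (by fun_prop)
      map_zero_left x := by
        simp [nullhomotopyVec_zero, lineClass_conj_apply_two_smul, collapseMap_comp_hopf_apply]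
      map_one_left x := by simp [nullhomotopyVec_one] }⟩⟩
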